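/- There exists a universal constant C > 0 with the following property. Let γ ∈ [1/3,1/2), α ∈ [0,1/2], x₀ ∈ ℝ, 0 < ρ ≤ 1/4, and R ≥ 2ρ. Let u be measurable, bounded on B_{2ρ}(x₀), integrable on B_ρ(x₀) with respect to dμ_α(x) = |x|^{−α}dx, and with Tail_α(u;x₀,1) < ∞; set ū_ρ = (∫_{B_ρ(x₀)} u dμ_α)/(∫_{B_ρ(x₀)} dμ_α), let φ be smooth with support in B_{2ρ}(x₀), 0 ≤ φ ≤ 1, φ ≡ 1 on B_ρ(x₀), |φ'| ≤ 2/ρ, and set ψ = (u−ū_ρ)φ. Then ∫_{ℝ∖B_1(x₀)} ∫_{B_R(x₀)} (|u(x)−u(y)| |ψ(x)| / (|x−y|^{1+2γ}|x|^{α}|y|^{α})) dx dy ≤ C ρ^{1−α} ‖u‖_{L^∞(B_{2ρ}(x₀))} ( ‖u‖_{L^∞(B_{2ρ}(x₀))} + Tail_α(u;x₀,1) ). -/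

import Mathlib

open MeasureTheory Real
open scoped ENNReal

/-- The weighted CKN kernel `|x-y|^{-1-2γ} |x|^{-α} |y|^{-α}` in dimension one. -/
noncomputable def cknK (γ α x y : ℝ) : ℝ :=
  |x - y| ^ (-(1 + 2 * γ)) * (|x| ^ (-α) * |y| ^ (-α))

/-- `u` is a weak solution of `𝓛_{γ,α} u = F` in the open set `I ⊆ ℝ`: for every test
function `φ ∈ C_c^∞(I)`, the symmetrized double integral converges absolutely and
`(1/2) ∫∫ (u(x)-u(y))(φ(x)-φ(y)) K_{γ,α}(x,y) dx dy = ∫ F φ`. -/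
def IsWeakSol (γ α : ℝ) (u F : ℝ → ℝ) (I : Set ℝ) : Prop :=
  ∀ φ : ℝ → ℝ, ContDiff ℝ (⊤ : ℕ∞) φ → HasCompactSupport φ → tsupport φ ⊆ I →
    MeasureTheory.Integrable
      (fun q : ℝ × ℝ => (u q.1 - u q.2) * (φ q.1 - φ q.2) * cknK γ α q.1 q.2) ∧
    (1 / 2) * (∫ q : ℝ × ℝ, (u q.1 - u q.2) * (φ q.1 - φ q.2) * cknK γ α q.1 q.2) =
      ∫ x : ℝ, F x * φ x

/-- The interval `B_r(x₀) = (x₀ - r, x₀ + r)`. -/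
def ball1 (x₀ r : ℝ) : Set ℝ := Set.Ioo (x₀ - r) (x₀ + r)

/-- The localized seminorm `[u]²_S = ∫_S ∫_S (u(x)-u(y))² K_{γ,α}(x,y) dx dy`,
as an element of `[0,∞]`. -/
noncomputable def eSemi (γ α : ℝ) (u : ℝ → ℝ) (S : Set ℝ) : ℝ≥0∞ :=
  ∫⁻ x in S, ∫⁻ y in S, ENNReal.ofReal ((u x - u y) ^ 2 * cknK γ α x y)

/-- The tail `Tail_α(u;x₀,R) = R^{2γ+α} ∫_{|x-x₀|≥R} |u(x)| |x-x₀|^{-1-2γ} |x|^{-α} dx`,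
as an element of `[0,∞]`. -/
noncomputable def eTail (γ α : ℝ) (u : ℝ → ℝ) (x₀ R : ℝ) : ℝ≥0∞ :=
  ENNReal.ofReal (R ^ (2 * γ + α)) *
    ∫⁻ x in {x : ℝ | R ≤ |x - x₀|},
      ENNReal.ofReal (|u x| * |x - x₀| ^ (-(1 + 2 * γ)) * |x| ^ (-α))

/-- The `L^∞` norm of `u` on the set `S`, as an element of `[0,∞]`. -/
noncomputable def eSup (u : ℝ → ℝ) (S : Set ℝ) : ℝ≥0∞ :=
  eLpNorm u ⊤ (volume.restrict S)

section Helpers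

lemma lintA {α : ℝ} (h0 : 0 ≤ α) (h1 : α ≤ 1/2) {L : ℝ} (hL : 0 ≤ L) :
    ∫⁻ x in Set.Ioo (0:ℝ) L, ENNReal.ofReal (x ^ (-α)) ≤ ENNReal.ofReal (2 * L ^ (1 - α)) := by
  have hexp : (-1:ℝ) < -α := by linarith
  have hint : IntegrableOn (fun x : ℝ => x ^ (-α)) (Set.Ioo 0 L) :=
    ((intervalIntegral.intervalIntegrable_rpow' hexp (a := 0) (b := L)).1).mono_set Set.Ioo_subset_Ioc_self
  have hnn : 0 ≤ᵐ[volume.restrict (Set.Ioo (0:ℝ) L)] fun x : ℝ => x ^ (-α) := by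
    filter_upwards [ae_restrict_mem measurableSet_Ioo] with x hx
    exact Real.rpow_nonneg hx.1.le _
  rw [← ofReal_integral_eq_lintegral_ofReal hint hnn]
  apply ENNReal.ofReal_le_ofReal
  have heq : ∫ x in Set.Ioo (0:ℝ) L, x ^ (-α) = ∫ x in (0:ℝ)..L, x ^ (-α) := by
    rw [intervalIntegral.integral_of_le hL, integral_Ioc_eq_integral_Ioo]
  rw [heq, integral_rpow (Or.inl hexp)]
  have h0r : (0:ℝ) ^ (-α + 1) = 0 := by
    rw [Real.zero_rpow]; linarith
  rw [h0r]
  have hpos : (0:ℝ) < -α + 1 := by linarith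
  have hLnn : 0 ≤ L ^ (-α + 1) := Real.rpow_nonneg hL _
  have : (-α + 1 : ℝ) = 1 - α := by ring
  rw [this] at hLnn ⊢
  rw [sub_zero, div_le_iff₀ (by linarith : (0:ℝ) < 1 - α)]
  nlinarith

lemma lintB {α : ℝ} (h0 : 0 ≤ α) (h1 : α ≤ 1/2) {c L : ℝ} (hc : 0 ≤ c) (hL : 0 ≤ L) :
    ∫⁻ x in Set.Ico c (c + L), ENNReal.ofReal (|x| ^ (-α)) ≤ ENNReal.ofReal (2 * L ^ (1 - α)) := by
  rw [← setLIntegral_congr (Ioo_ae_eq_Ico (a := c) (b := c + L))]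
  have step1 : ∫⁻ x in Set.Ioo c (c + L), ENNReal.ofReal (|x| ^ (-α)) ≤
      ∫⁻ x in Set.Ioo c (c + L), ENNReal.ofReal ((x - c) ^ (-α)) := by
    refine setLIntegral_mono' measurableSet_Ioo fun x hx => ?_
    apply ENNReal.ofReal_le_ofReal
    have hxc : 0 < x - c := by linarith [hx.1]
    have : |x| = x := abs_of_pos (by linarith [hx.1])
    rw [this]
    exact Real.rpow_le_rpow_of_nonpos hxc (by linarith) (by linarith)
  refine step1.trans ?_
  have step2 : ∫⁻ x in Set.Ioo c (c + L), ENNReal.ofReal ((x - c) ^ (-α)) =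
      ∫⁻ x in Set.Ioo (0:ℝ) L, ENNReal.ofReal (x ^ (-α)) := by
    have h1 : ∫⁻ x in Set.Ioo c (c + L), ENNReal.ofReal ((x - c) ^ (-α)) =
        ∫⁻ x, (Set.Ioo (0:ℝ) L).indicator (fun t => ENNReal.ofReal (t ^ (-α))) (x + -c) := by
      rw [← lintegral_indicator measurableSet_Ioo]
      congr 1
      ext x
      by_cases hx : x ∈ Set.Ioo c (c + L)
      · have hx' : x + -c ∈ Set.Ioo (0:ℝ) L := ⟨by linarith [hx.1], by linarith [hx.2]⟩
        rw [Set.indicator_of_mem hx, Set.indicator_of_mem hx']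
        norm_num [sub_eq_add_neg]
      · have hx' : x + -c ∉ Set.Ioo (0:ℝ) L := by
          intro h; exact hx ⟨by linarith [h.1], by linarith [h.2]⟩
        rw [Set.indicator_of_notMem hx, Set.indicator_of_notMem hx']
    rw [h1, lintegral_add_right_eq_self, lintegral_indicator measurableSet_Ioo]
  rw [step2]
  exact lintA h0 h1 hL

lemma lintC {α : ℝ} (h0 : 0 ≤ α) (h1 : α ≤ 1/2) {a b : ℝ} (hab : a ≤ b) :
    ∫⁻ x in Set.Ioo a b, ENNReal.ofReal (|x| ^ (-α)) ≤
      ENNReal.ofReal (4 * (b - a) ^ (1 - α)) := by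
  set L := b - a with hLdef
  have hL : 0 ≤ L := by simp [hLdef]; linarith
  have hsplit : Set.Ioo a b = (Set.Ioo a b ∩ Set.Ioi 0) ∪ (Set.Ioo a b ∩ Set.Iic 0) := by
    ext x; simp only [Set.mem_union, Set.mem_inter_iff, Set.mem_Ioi, Set.mem_Iic]
    constructor
    · intro h; rcases le_or_gt x 0 with h'|h'
      · exact Or.inr ⟨h, h'⟩
      · exact Or.inl ⟨h, h'⟩
    · rintro (⟨h, _⟩|⟨h, _⟩) <;> exact h
  have hdisj : Disjoint (Set.Ioo a b ∩ Set.Ioi 0) (Set.Ioo a b ∩ Set.Iic 0) := by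
    apply Set.disjoint_left.2
    rintro x ⟨_, hx1⟩ ⟨_, hx2⟩
    exact absurd (show x ≤ 0 from hx2) (not_le.2 (show (0:ℝ) < x from hx1))
  rw [hsplit, lintegral_union (measurableSet_Ioo.inter measurableSet_Iic) hdisj]
  have hpos : ∫⁻ x in Set.Ioo a b ∩ Set.Ioi 0, ENNReal.ofReal (|x| ^ (-α)) ≤
      ENNReal.ofReal (2 * L ^ (1 - α)) := by
    refine le_trans (lintegral_mono_set ?_) (lintB h0 h1 (le_max_right a 0) hL)
    rintro x ⟨hx1, hx2⟩
    constructor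
    · rcases max_cases a 0 with ⟨h, _⟩|⟨h, _⟩ <;> rw [h]
      · exact hx1.1.le
      · exact (Set.mem_Ioi.1 hx2).le
    · calc x < b := hx1.2
        _ ≤ max a 0 + L := by
            rcases le_or_gt a 0 with h|h
            · rw [max_eq_right h]; simp [hLdef]; exact h
            · rw [max_eq_left h.le]; simp [hLdef]
  have hneg : ∫⁻ x in Set.Ioo a b ∩ Set.Iic 0, ENNReal.ofReal (|x| ^ (-α)) ≤
      ENNReal.ofReal (2 * L ^ (1 - α)) := by
    have hrefl : ∫⁻ x in Set.Ioo a b ∩ Set.Iic 0, ENNReal.ofReal (|x| ^ (-α)) =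
        ∫⁻ x in Set.Ioo (-b) (-a) ∩ Set.Ici 0, ENNReal.ofReal (|x| ^ (-α)) := by
      rw [← lintegral_indicator ((measurableSet_Ioo.inter measurableSet_Iic)),
        ← lintegral_indicator ((measurableSet_Ioo.inter measurableSet_Ici))]
      have key : ∀ x : ℝ, (Set.Ioo a b ∩ Set.Iic 0).indicator
          (fun x => ENNReal.ofReal (|x| ^ (-α))) x =
          ((Set.Ioo (-b) (-a) ∩ Set.Ici 0).indicator
            (fun x => ENNReal.ofReal (|x| ^ (-α)))) (-x) := by
        intro x
        by_cases hx : x ∈ Set.Ioo a b ∩ Set.Iic 0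
        · have hx' : -x ∈ Set.Ioo (-b) (-a) ∩ Set.Ici 0 :=
            ⟨⟨by linarith [hx.1.2], by linarith [hx.1.1]⟩, by simpa using hx.2⟩
          rw [Set.indicator_of_mem hx, Set.indicator_of_mem hx', abs_neg]
        · have hx' : -x ∉ Set.Ioo (-b) (-a) ∩ Set.Ici 0 := by
            intro h
            exact hx ⟨⟨by linarith [h.1.2], by linarith [h.1.1]⟩, by
              have := h.2; simp only [Set.mem_Ici] at this; simp; linarith⟩
          rw [Set.indicator_of_notMem hx, Set.indicator_of_notMem hx']
      simp_rw [key]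
      have hmeas : Measurable ((Set.Ioo (-b) (-a) ∩ Set.Ici 0).indicator
          (fun x : ℝ => ENNReal.ofReal (|x| ^ (-α)))) := by
        apply Measurable.indicator ?_ (measurableSet_Ioo.inter measurableSet_Ici)
        fun_prop
      exact (Measure.measurePreserving_neg volume).lintegral_comp hmeas
    rw [hrefl]
    refine le_trans (lintegral_mono_set ?_) (lintB h0 h1 (le_max_right (-b) 0) hL)
    rintro x ⟨hx1, hx2⟩
    constructor
    · rcases max_cases (-b) 0 with ⟨h, _⟩|⟨h, _⟩ <;> rw [h]
      · exact hx1.1.le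
      · exact hx2
    · have hx2' : (0:ℝ) ≤ x := hx2
      calc x < -a := hx1.2
        _ ≤ max (-b) 0 + L := by
            rcases le_or_gt 0 (-b) with h|h
            · rw [max_eq_left h]; simp only [hLdef]; linarith
            · rw [max_eq_right h.le]; simp only [hLdef]; linarith
  calc _ ≤ ENNReal.ofReal (2 * L ^ (1 - α)) + ENNReal.ofReal (2 * L ^ (1 - α)) :=
        add_le_add hpos hneg
    _ = ENNReal.ofReal (4 * L ^ (1 - α)) := by
        rw [← ENNReal.ofReal_add (by positivity) (by positivity)]; ring_nf

lemma lintD_pos : ∫⁻ y in Set.Ici (1:ℝ), ENNReal.ofReal (|y| ^ (-(5/3) : ℝ)) ≤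
    ENNReal.ofReal (3/2) := by
  rw [← setLIntegral_congr (Ioi_ae_eq_Ici (a := (1:ℝ)))]
  have heq : ∫⁻ y in Set.Ioi (1:ℝ), ENNReal.ofReal (|y| ^ (-(5/3) : ℝ)) =
      ∫⁻ y in Set.Ioi (1:ℝ), ENNReal.ofReal (y ^ (-(5/3) : ℝ)) := by
    refine setLIntegral_congr_fun measurableSet_Ioi (fun y hy => ?_)
    show ENNReal.ofReal (|y| ^ (-(5/3) : ℝ)) = ENNReal.ofReal (y ^ (-(5/3) : ℝ))
    rw [abs_of_pos (lt_trans one_pos hy)]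
  rw [heq]
  have hint : IntegrableOn (fun y : ℝ => y ^ (-(5/3) : ℝ)) (Set.Ioi 1) :=
    integrableOn_Ioi_rpow_of_lt (by norm_num) one_pos
  have hnn : 0 ≤ᵐ[volume.restrict (Set.Ioi (1:ℝ))] fun y : ℝ => y ^ (-(5/3) : ℝ) := by
    filter_upwards [ae_restrict_mem measurableSet_Ioi] with y hy
    exact Real.rpow_nonneg (le_of_lt (lt_trans one_pos hy)) _
  rw [← ofReal_integral_eq_lintegral_ofReal hint hnn]
  apply ENNReal.ofReal_le_ofReal
  rw [integral_Ioi_rpow_of_lt (by norm_num) one_pos]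
  norm_num

lemma lintD (x₀ : ℝ) :
    ∫⁻ y in {y : ℝ | 1 ≤ |y - x₀|}, ENNReal.ofReal (|y - x₀| ^ (-(5/3) : ℝ)) ≤ 3 := by
  have hsetm : MeasurableSet {t : ℝ | 1 ≤ |t|} := by
    have : {t : ℝ | 1 ≤ |t|} = Set.Iic (-1) ∪ Set.Ici 1 := by
      ext t; simp only [Set.mem_setOf_eq, Set.mem_union, Set.mem_Iic, Set.mem_Ici, le_abs]
      constructor
      · rintro (h|h)
        · exact Or.inr h
        · exact Or.inl (by linarith)
      · rintro (h|h)
        · exact Or.inr (by linarith)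
        · exact Or.inl h
    rw [this]; exact measurableSet_Iic.union measurableSet_Ici
  -- translate
  have htrans : ∫⁻ y in {y : ℝ | 1 ≤ |y - x₀|}, ENNReal.ofReal (|y - x₀| ^ (-(5/3) : ℝ)) =
      ∫⁻ t in {t : ℝ | 1 ≤ |t|}, ENNReal.ofReal (|t| ^ (-(5/3) : ℝ)) := by
    have hset : MeasurableSet {y : ℝ | 1 ≤ |y - x₀|} :=
      measurableSet_le measurable_const (measurable_id.sub_const x₀).abs
    rw [← lintegral_indicator hset, ← lintegral_indicator hsetm]
    have key : ∀ y : ℝ, ({y : ℝ | 1 ≤ |y - x₀|}).indicator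
        (fun y => ENNReal.ofReal (|y - x₀| ^ (-(5/3) : ℝ))) y =
        ({t : ℝ | 1 ≤ |t|}).indicator (fun t => ENNReal.ofReal (|t| ^ (-(5/3) : ℝ))) (y + -x₀) := by
      intro y
      by_cases hy : 1 ≤ |y - x₀|
      · rw [Set.indicator_of_mem (s := {y : ℝ | 1 ≤ |y - x₀|}) hy,
          Set.indicator_of_mem (s := {t : ℝ | 1 ≤ |t|}) (by simpa [sub_eq_add_neg] using hy)]
        norm_num [sub_eq_add_neg]
      · rw [Set.indicator_of_notMem (s := {y : ℝ | 1 ≤ |y - x₀|}) hy,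
          Set.indicator_of_notMem (s := {t : ℝ | 1 ≤ |t|}) (by simpa [sub_eq_add_neg] using hy)]
    simp_rw [key]
    exact lintegral_add_right_eq_self _ (-x₀)
  rw [htrans]
  have hsplit : {t : ℝ | 1 ≤ |t|} = Set.Iic (-1:ℝ) ∪ Set.Ici 1 := by
    ext t; simp only [Set.mem_setOf_eq, Set.mem_union, Set.mem_Iic, Set.mem_Ici, le_abs]
    constructor
    · rintro (h|h)
      · exact Or.inr h
      · exact Or.inl (by linarith)
    · rintro (h|h)
      · exact Or.inr (by linarith)
      · exact Or.inl h
  have hdisj : Disjoint (Set.Iic (-1:ℝ)) (Set.Ici (1:ℝ)) := by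
    apply Set.disjoint_left.2
    intro t h1 h2
    simp only [Set.mem_Iic] at h1; simp only [Set.mem_Ici] at h2; linarith
  rw [hsplit, lintegral_union measurableSet_Ici hdisj]
  have hneg : ∫⁻ y in Set.Iic (-1:ℝ), ENNReal.ofReal (|y| ^ (-(5/3) : ℝ)) =
      ∫⁻ y in Set.Ici (1:ℝ), ENNReal.ofReal (|y| ^ (-(5/3) : ℝ)) := by
    rw [← lintegral_indicator measurableSet_Iic, ← lintegral_indicator measurableSet_Ici]
    have key : ∀ y : ℝ, (Set.Iic (-1:ℝ)).indicator
        (fun y => ENNReal.ofReal (|y| ^ (-(5/3) : ℝ))) y =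
        (Set.Ici (1:ℝ)).indicator (fun t => ENNReal.ofReal (|t| ^ (-(5/3) : ℝ))) (-y) := by
      intro y
      by_cases hy : y ∈ Set.Iic (-1:ℝ)
      · have hy' : -y ∈ Set.Ici (1:ℝ) := by simp only [Set.mem_Iic] at hy; simp; linarith
        rw [Set.indicator_of_mem hy, Set.indicator_of_mem hy', abs_neg]
      · have hy' : -y ∉ Set.Ici (1:ℝ) := by
          simp only [Set.mem_Iic, not_le] at hy
          simp only [Set.mem_Ici, not_le]
          linarith
        rw [Set.indicator_of_notMem hy, Set.indicator_of_notMem hy']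
    simp_rw [key]
    have hmeas : Measurable ((Set.Ici (1:ℝ)).indicator
        (fun t : ℝ => ENNReal.ofReal (|t| ^ (-(5/3) : ℝ)))) := by
      apply Measurable.indicator ?_ measurableSet_Ici
      fun_prop
    exact (Measure.measurePreserving_neg volume).lintegral_comp hmeas
  rw [hneg]
  calc _ ≤ ENNReal.ofReal (3/2) + ENNReal.ofReal (3/2) := add_le_add lintD_pos lintD_pos
    _ = ENNReal.ofReal 3 := by rw [← ENNReal.ofReal_add] <;> norm_num
    _ ≤ 3 := by rw [ENNReal.ofReal_ofNat]

end Helpers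

/-- Far-field estimate in the hole-filling argument: with `ū_ρ` the `μ_α`-average of `u`
on `B_ρ(x₀)` and `ψ = (u - ū_ρ)φ` for a cutoff `φ`, the mixed integral over
`(ℝ ∖ B_1) × B_R` is bounded by `C ρ^{1-α} ‖u‖_{L^∞(B_{2ρ})}
(‖u‖_{L^∞(B_{2ρ})} + Tail_α(u;x₀,1))`, with a universal constant `C`. -/

theorem stmt_11 :
    ∃ C : ℝ, 0 < C ∧
      ∀ (γ α x₀ ρ R : ℝ),
        γ ∈ Set.Ico (1 / 3 : ℝ) (1 / 2) → α ∈ Set.Icc (0 : ℝ) (1 / 2) →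
        0 < ρ → ρ ≤ 1 / 4 → 2 * ρ ≤ R →
        ∀ u : ℝ → ℝ, Measurable u →
          eSup u (ball1 x₀ (2 * ρ)) ≠ ⊤ →
          MeasureTheory.IntegrableOn (fun x => u x * |x| ^ (-α)) (ball1 x₀ ρ) →
          eTail γ α u x₀ 1 ≠ ⊤ →
          ∀ φ : ℝ → ℝ, ContDiff ℝ (⊤ : ℕ∞) φ → tsupport φ ⊆ ball1 x₀ (2 * ρ) →
            (∀ x, 0 ≤ φ x ∧ φ x ≤ 1) → (∀ x ∈ ball1 x₀ ρ, φ x = 1) →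
            (∀ x, |deriv φ x| ≤ 2 / ρ) →
            (∫⁻ y in (ball1 x₀ 1)ᶜ,
              ∫⁻ x in ball1 x₀ R,
                ENNReal.ofReal (|u x - u y| *
                  |(u x - (∫ t in ball1 x₀ ρ, u t * |t| ^ (-α)) /
                      (∫ t in ball1 x₀ ρ, |t| ^ (-α))) * φ x| *
                  cknK γ α x y)) ≤
              ENNReal.ofReal (C * ρ ^ (1 - α)) * eSup u (ball1 x₀ (2 * ρ)) *
                (eSup u (ball1 x₀ (2 * ρ)) + eTail γ α u x₀ 1) := by
  refine ⟨10000, by norm_num, ?_⟩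
  intro γ α x₀ ρ R hγ hα hρ hρ14 hR u hu hMfin hInt hTfin φ hφsm hφsupp hφ01 hφ1 hφd
  obtain ⟨hγ1, hγ2⟩ := hγ
  obtain ⟨hα0, hα12⟩ := hα
  set M := (eSup u (ball1 x₀ (2 * ρ))).toReal with hMdef
  have hM0 : 0 ≤ M := ENNReal.toReal_nonneg
  set ubar := (∫ t in ball1 x₀ ρ, u t * |t| ^ (-α)) / (∫ t in ball1 x₀ ρ, |t| ^ (-α))
    with hubars
  have hb2 : ball1 x₀ (2 * ρ) = Set.Ioo (x₀ - 2 * ρ) (x₀ + 2 * ρ) := rfl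
  have hb1 : ball1 x₀ ρ = Set.Ioo (x₀ - ρ) (x₀ + ρ) := rfl
  have hball_meas : MeasurableSet (ball1 x₀ (2 * ρ)) := by rw [hb2]; exact measurableSet_Ioo
  have hball1_meas : MeasurableSet (ball1 x₀ ρ) := by rw [hb1]; exact measurableSet_Ioo
  -- a.e. bound
  have haeS : ∀ᵐ x ∂(volume.restrict (ball1 x₀ (2 * ρ))), |u x| ≤ M := by
    have h1 : ∀ᵐ x ∂(volume.restrict (ball1 x₀ (2 * ρ))),
        (‖u x‖₊ : ℝ≥0∞) ≤ eSup u (ball1 x₀ (2 * ρ)) := by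
      simpa [eSup, eLpNorm_exponent_top, enorm_eq_nnnorm] using
        ae_le_eLpNormEssSup (f := u) (μ := volume.restrict (ball1 x₀ (2 * ρ)))
    filter_upwards [h1] with x hx
    have h2 := (ENNReal.toReal_le_toReal (by simp) hMfin).2 hx
    rw [← hMdef] at h2
    simpa using h2
  have hae : ∀ᵐ x, x ∈ ball1 x₀ (2 * ρ) → |u x| ≤ M := (ae_restrict_iff' hball_meas).1 haeS
  -- integrability of the weight on B_ρ
  have hIooWρ : ∫⁻ x in Set.Ioo (x₀ - ρ) (x₀ + ρ), ENNReal.ofReal (|x| ^ (-α)) ≠ ⊤ :=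
    ne_top_of_le_ne_top ENNReal.ofReal_ne_top (lintC hα0 hα12 (by linarith))
  have hwmeas : Measurable fun t : ℝ => |t| ^ (-α) := by fun_prop
  have hwint : IntegrableOn (fun t : ℝ => |t| ^ (-α)) (ball1 x₀ ρ) := by
    refine ⟨hwmeas.aestronglyMeasurable, ?_⟩
    rw [hasFiniteIntegral_iff_ofReal (ae_of_all _ fun t => Real.rpow_nonneg (abs_nonneg t) _)]
    rw [hb1]
    exact Ne.lt_top hIooWρ
  -- positivity of the denominator
  have hD : 0 < ∫ t in ball1 x₀ ρ, |t| ^ (-α) := by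
    rw [setIntegral_pos_iff_support_of_nonneg_ae
      (ae_of_all _ fun t => Real.rpow_nonneg (abs_nonneg t) _) hwint]
    have hsub : ball1 x₀ ρ \ {0} ⊆ (Function.support fun t : ℝ => |t| ^ (-α)) ∩ ball1 x₀ ρ := by
      rintro t ⟨ht1, ht2⟩
      refine ⟨?_, ht1⟩
      have : 0 < |t| := abs_pos.2 (by simpa using ht2)
      exact ne_of_gt (Real.rpow_pos_of_pos this _)
    calc (0:ℝ≥0∞) < ENNReal.ofReal (2 * ρ) := by
          rw [ENNReal.ofReal_pos]; linarith
      _ = volume (ball1 x₀ ρ \ {0}) := by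
          rw [measure_diff_null (measure_singleton 0), hb1, Real.volume_Ioo]
          congr 1; ring
      _ ≤ _ := measure_mono hsub
  -- |ubar| ≤ M
  have hubarle : |ubar| ≤ M := by
    rw [hubars, abs_div, abs_of_pos hD, div_le_iff₀ hD]
    have hsub : ball1 x₀ ρ ⊆ ball1 x₀ (2 * ρ) := by
      rw [hb1, hb2]; exact Set.Ioo_subset_Ioo (by linarith) (by linarith)
    have haeρ : ∀ᵐ t ∂(volume.restrict (ball1 x₀ ρ)),
        |u t * |t| ^ (-α)| ≤ M * |t| ^ (-α) := by
      filter_upwards [ae_restrict_of_ae hae, ae_restrict_mem hball1_meas] with t h1 h2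
      have h3 := h1 (hsub h2)
      rw [abs_mul, abs_of_nonneg (Real.rpow_nonneg (abs_nonneg t) _)]
      exact mul_le_mul_of_nonneg_right h3 (Real.rpow_nonneg (abs_nonneg t) _)
    calc |∫ t in ball1 x₀ ρ, u t * |t| ^ (-α)|
        ≤ ∫ t in ball1 x₀ ρ, |u t * |t| ^ (-α)| := by
          simpa only [Real.norm_eq_abs] using
            norm_integral_le_integral_norm (μ := volume.restrict (ball1 x₀ ρ))
              (f := fun t => u t * |t| ^ (-α))
      _ ≤ ∫ t in ball1 x₀ ρ, M * |t| ^ (-α) :=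
          integral_mono_ae hInt.abs (hwint.const_mul M) haeρ
      _ = M * ∫ t in ball1 x₀ ρ, |t| ^ (-α) := integral_const_mul M _
  -- pointwise bound for the test-function part
  have hψae : ∀ᵐ x, x ∈ ball1 x₀ (2 * ρ) → |u x - ubar| ≤ 2 * M := by
    filter_upwards [hae] with x hx hmem
    calc |u x - ubar| ≤ |u x| + |ubar| := abs_sub _ _
      _ ≤ M + M := add_le_add (hx hmem) hubarle
      _ = 2 * M := by ring
  set S1 : Set ℝ := {y : ℝ | 1 ≤ |y - x₀|} with hS1def
  have hS1meas : MeasurableSet S1 :=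
    measurableSet_le measurable_const (measurable_id.sub_const x₀).abs
  have hS1 : (ball1 x₀ 1)ᶜ = S1 := by
    ext y
    simp only [hS1def, ball1, Set.mem_compl_iff, Set.mem_Ioo, Set.mem_setOf_eq, not_and_or,
      not_lt, le_abs]
    constructor
    · rintro (h | h)
      · right; linarith
      · left; linarith
    · rintro (h | h)
      · right; linarith
      · left; linarith
  rw [hS1]
  set A : ℝ → ℝ := fun y => |y - x₀| ^ (-(1 + 2 * γ)) * |y| ^ (-α) with hAdef
  set c : ℝ → ℝ := fun y => (M + |u y|) * (2 * M) * (4 * A y) with hcdef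
  have hAnn : ∀ y, 0 ≤ A y := fun y => by
    simp only [hAdef]; positivity
  have hcnn : ∀ y, 0 ≤ c y := fun y => by
    simp only [hcdef]
    exact mul_nonneg (mul_nonneg (add_nonneg hM0 (abs_nonneg _)) (by linarith))
      (mul_nonneg (by norm_num) (hAnn y))
  have hKbound : ∀ y ∈ S1, ∀ᵐ x : ℝ, ENNReal.ofReal
      (|u x - u y| * |(u x - ubar) * φ x| * cknK γ α x y) ≤
      (ball1 x₀ (2 * ρ)).indicator
        (fun x => ENNReal.ofReal (c y) * ENNReal.ofReal (|x| ^ (-α))) x := by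
    intro y hy
    have hy1 : 1 ≤ |y - x₀| := hy
    filter_upwards [hae, hψae] with x hx hψx
    by_cases hmem : x ∈ ball1 x₀ (2 * ρ)
    · rw [Set.indicator_of_mem hmem, ← ENNReal.ofReal_mul (hcnn y)]
      apply ENNReal.ofReal_le_ofReal
      have hux : |u x| ≤ M := hx hmem
      have hub : |u x - ubar| ≤ 2 * M := hψx hmem
      have h1 : |u x - u y| ≤ M + |u y| := le_trans (abs_sub _ _) (by linarith)
      have hφx : |φ x| ≤ 1 := abs_le.2 ⟨by linarith [(hφ01 x).1], (hφ01 x).2⟩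
      have h2 : |(u x - ubar) * φ x| ≤ 2 * M := by
        rw [abs_mul]
        calc |u x - ubar| * |φ x| ≤ (2 * M) * 1 :=
            mul_le_mul hub hφx (abs_nonneg _) (by linarith)
          _ = 2 * M := mul_one _
      have hxx0 : |x - x₀| < 2 * ρ := by
        rw [hb2] at hmem
        rw [abs_lt]; constructor
        · linarith [hmem.1]
        · linarith [hmem.2]
      have hdist : |y - x₀| / 2 ≤ |x - y| := by
        have h5 : |y - x₀| ≤ |y - x| + |x - x₀| := by
          calc |y - x₀| = |(y - x) + (x - x₀)| := by ring_nf
            _ ≤ |y - x| + |x - x₀| := abs_add_le _ _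
        have h6 : |y - x| = |x - y| := abs_sub_comm _ _
        have h7 : |x - x₀| ≤ 1 / 2 := by linarith
        linarith [hy1]
      have hKnn : 0 ≤ cknK γ α x y := by unfold cknK; positivity
      have hK : cknK γ α x y ≤ 4 * |y - x₀| ^ (-(1 + 2 * γ)) * (|x| ^ (-α) * |y| ^ (-α)) := by
        unfold cknK
        have hbase : 0 < |y - x₀| / 2 := by linarith
        have hstep : |x - y| ^ (-(1 + 2 * γ)) ≤ (|y - x₀| / 2) ^ (-(1 + 2 * γ)) :=
          Real.rpow_le_rpow_of_nonpos hbase hdist (by linarith)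
        have heq : (|y - x₀| / 2) ^ (-(1 + 2 * γ)) =
            |y - x₀| ^ (-(1 + 2 * γ)) * 2 ^ (1 + 2 * γ) := by
          rw [Real.div_rpow (abs_nonneg _) (by norm_num : (0:ℝ) ≤ 2), div_eq_mul_inv,
            ← Real.rpow_neg (by norm_num : (0:ℝ) ≤ 2), neg_neg]
        have h2γ : (2:ℝ) ^ (1 + 2 * γ) ≤ 4 := by
          calc (2:ℝ) ^ (1 + 2 * γ) ≤ 2 ^ (2:ℝ) :=
              Real.rpow_le_rpow_of_exponent_le one_le_two (by linarith)
            _ = 4 := by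
              rw [show (2:ℝ) = ((2:ℕ):ℝ) from by norm_num, Real.rpow_natCast]; norm_num
        have hstep2 : |x - y| ^ (-(1 + 2 * γ)) ≤ 4 * |y - x₀| ^ (-(1 + 2 * γ)) := by
          calc |x - y| ^ (-(1 + 2 * γ)) ≤ |y - x₀| ^ (-(1 + 2 * γ)) * 2 ^ (1 + 2 * γ) :=
              heq ▸ hstep
            _ ≤ |y - x₀| ^ (-(1 + 2 * γ)) * 4 :=
              mul_le_mul_of_nonneg_left h2γ (by positivity)
            _ = 4 * |y - x₀| ^ (-(1 + 2 * γ)) := mul_comm _ _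
        exact mul_le_mul_of_nonneg_right hstep2 (by positivity)
      calc |u x - u y| * |(u x - ubar) * φ x| * cknK γ α x y
          ≤ ((M + |u y|) * (2 * M)) * cknK γ α x y :=
            mul_le_mul (mul_le_mul h1 h2 (abs_nonneg _)
              (add_nonneg hM0 (abs_nonneg _))) le_rfl hKnn
              (mul_nonneg (add_nonneg hM0 (abs_nonneg _)) (by linarith))
        _ ≤ ((M + |u y|) * (2 * M)) *
            (4 * |y - x₀| ^ (-(1 + 2 * γ)) * (|x| ^ (-α) * |y| ^ (-α))) :=
            mul_le_mul_of_nonneg_left hK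
              (mul_nonneg (add_nonneg hM0 (abs_nonneg _)) (by linarith))
        _ = c y * |x| ^ (-α) := by simp only [hcdef, hAdef]; ring
    · rw [Set.indicator_of_notMem hmem]
      have hφ0 : φ x = 0 := image_eq_zero_of_notMem_tsupport fun hc => hmem (hφsupp hc)
      simp [hφ0]
  have hW2 : ∫⁻ x in ball1 x₀ (2 * ρ), ENNReal.ofReal (|x| ^ (-α)) ≤
      ENNReal.ofReal (16 * ρ ^ (1 - α)) := by
    rw [hb2]
    refine le_trans (lintC hα0 hα12 (by linarith)) (ENNReal.ofReal_le_ofReal ?_)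
    have h4 : x₀ + 2 * ρ - (x₀ - 2 * ρ) = 4 * ρ := by ring
    rw [h4]
    have h5 : (4 * ρ) ^ (1 - α) = 4 ^ (1 - α) * ρ ^ (1 - α) :=
      Real.mul_rpow (by norm_num) hρ.le
    have h6 : (4:ℝ) ^ (1 - α) ≤ 4 := by
      calc (4:ℝ) ^ (1 - α) ≤ 4 ^ (1:ℝ) :=
          Real.rpow_le_rpow_of_exponent_le (by norm_num) (by linarith)
        _ = 4 := Real.rpow_one 4
    have h7 : 0 ≤ ρ ^ (1 - α) := Real.rpow_nonneg hρ.le _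
    nlinarith
  have hinner : ∀ y ∈ S1,
      (∫⁻ x in ball1 x₀ R, ENNReal.ofReal
        (|u x - u y| * |(u x - ubar) * φ x| * cknK γ α x y)) ≤
      ENNReal.ofReal (c y) * ENNReal.ofReal (16 * ρ ^ (1 - α)) := by
    intro y hy
    calc (∫⁻ x in ball1 x₀ R, ENNReal.ofReal
          (|u x - u y| * |(u x - ubar) * φ x| * cknK γ α x y))
        ≤ ∫⁻ x in ball1 x₀ R, (ball1 x₀ (2 * ρ)).indicator
            (fun x => ENNReal.ofReal (c y) * ENNReal.ofReal (|x| ^ (-α))) x :=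
          lintegral_mono_ae (ae_restrict_of_ae (hKbound y hy))
      _ ≤ ∫⁻ x, (ball1 x₀ (2 * ρ)).indicator
            (fun x => ENNReal.ofReal (c y) * ENNReal.ofReal (|x| ^ (-α))) x :=
          setLIntegral_le_lintegral _ _
      _ = ∫⁻ x in ball1 x₀ (2 * ρ), ENNReal.ofReal (c y) * ENNReal.ofReal (|x| ^ (-α)) :=
          lintegral_indicator hball_meas _
      _ = ENNReal.ofReal (c y) * ∫⁻ x in ball1 x₀ (2 * ρ), ENNReal.ofReal (|x| ^ (-α)) :=
          lintegral_const_mul' _ _ ENNReal.ofReal_ne_top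
      _ ≤ ENNReal.ofReal (c y) * ENNReal.ofReal (16 * ρ ^ (1 - α)) :=
          mul_le_mul_right hW2 _
  have hJ : (∫⁻ y in S1, ENNReal.ofReal (A y)) ≤ 11 := by
    have hpt : ∀ y ∈ S1, ENNReal.ofReal (A y) ≤
        ENNReal.ofReal (|y - x₀| ^ (-(5/3) : ℝ)) +
          (Set.Ioo (-1:ℝ) 1).indicator (fun t => ENNReal.ofReal (|t| ^ (-α))) y := by
      intro y hy
      have hy1 : 1 ≤ |y - x₀| := hy
      rcases le_or_gt 1 |y| with h | h
      · refine le_trans ?_ le_self_add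
        apply ENNReal.ofReal_le_ofReal
        have hb1' : |y| ^ (-α) ≤ 1 := Real.rpow_le_one_of_one_le_of_nonpos h (by linarith)
        have hb2' : |y - x₀| ^ (-(1 + 2 * γ)) ≤ |y - x₀| ^ (-(5/3) : ℝ) :=
          Real.rpow_le_rpow_of_exponent_le hy1 (by linarith)
        calc A y ≤ |y - x₀| ^ (-(1 + 2 * γ)) * 1 := by
              simp only [hAdef]
              exact mul_le_mul_of_nonneg_left hb1' (by positivity)
          _ = |y - x₀| ^ (-(1 + 2 * γ)) := mul_one _
          _ ≤ _ := hb2'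
      · have hmem : y ∈ Set.Ioo (-1:ℝ) 1 := by
          obtain ⟨h1', h2'⟩ := abs_lt.1 h
          exact ⟨h1', h2'⟩
        rw [Set.indicator_of_mem hmem]
        refine le_trans ?_ le_add_self
        apply ENNReal.ofReal_le_ofReal
        have hb2' : |y - x₀| ^ (-(1 + 2 * γ)) ≤ 1 :=
          Real.rpow_le_one_of_one_le_of_nonpos hy1 (by linarith)
        calc A y ≤ 1 * |y| ^ (-α) := by
              simp only [hAdef]
              exact mul_le_mul_of_nonneg_right hb2' (by positivity)
          _ = |y| ^ (-α) := one_mul _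
    calc (∫⁻ y in S1, ENNReal.ofReal (A y)) ≤
        ∫⁻ y in S1, (ENNReal.ofReal (|y - x₀| ^ (-(5/3) : ℝ)) +
          (Set.Ioo (-1:ℝ) 1).indicator (fun t => ENNReal.ofReal (|t| ^ (-α))) y) :=
          setLIntegral_mono' hS1meas hpt
      _ = (∫⁻ y in S1, ENNReal.ofReal (|y - x₀| ^ (-(5/3) : ℝ))) +
          ∫⁻ y in S1, (Set.Ioo (-1:ℝ) 1).indicator (fun t => ENNReal.ofReal (|t| ^ (-α))) y :=
          lintegral_add_left (by fun_prop) _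
      _ ≤ 3 + 8 := by
          refine add_le_add ?_ ?_
          · rw [hS1def]; exact lintD x₀
          · calc ∫⁻ y in S1, (Set.Ioo (-1:ℝ) 1).indicator
                  (fun t => ENNReal.ofReal (|t| ^ (-α))) y
                ≤ ∫⁻ y, (Set.Ioo (-1:ℝ) 1).indicator
                    (fun t => ENNReal.ofReal (|t| ^ (-α))) y := setLIntegral_le_lintegral _ _
              _ = ∫⁻ y in Set.Ioo (-1:ℝ) 1, ENNReal.ofReal (|y| ^ (-α)) :=
                  lintegral_indicator measurableSet_Ioo _
              _ ≤ ENNReal.ofReal (4 * (1 - (-1:ℝ)) ^ (1 - α)) := lintC hα0 hα12 (by norm_num)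
              _ ≤ 8 := by
                  rw [show ((8:ℝ≥0∞)) = ENNReal.ofReal 8 from (ENNReal.ofReal_ofNat 8).symm]
                  apply ENNReal.ofReal_le_ofReal
                  rw [show ((1:ℝ) - (-1)) = 2 from by norm_num]
                  have h6 : (2:ℝ) ^ (1 - α) ≤ 2 := by
                    calc (2:ℝ) ^ (1 - α) ≤ 2 ^ (1:ℝ) :=
                        Real.rpow_le_rpow_of_exponent_le (by norm_num) (by linarith)
                      _ = 2 := Real.rpow_one 2
                  linarith
      _ = 11 := by norm_num
  have hTeq : (∫⁻ y in S1, ENNReal.ofReal (|u y| * A y)) = eTail γ α u x₀ 1 := by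
    rw [eTail, Real.one_rpow, ENNReal.ofReal_one, one_mul, hS1def]
    refine lintegral_congr fun y => ?_
    simp only [hAdef]
    congr 1
    ring
  have hsplitc : ∀ y : ℝ, ENNReal.ofReal (c y) =
      ENNReal.ofReal (8 * M) *
        (ENNReal.ofReal (M * A y) + ENNReal.ofReal (|u y| * A y)) := by
    intro y
    rw [← ENNReal.ofReal_add (mul_nonneg hM0 (hAnn y)) (mul_nonneg (abs_nonneg _) (hAnn y)),
      ← ENNReal.ofReal_mul (by linarith)]
    simp only [hcdef]
    congr 1
    ring
  have houter : (∫⁻ y in S1, ENNReal.ofReal (c y)) ≤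
      ENNReal.ofReal (8 * M) * (ENNReal.ofReal M * 11 + eTail γ α u x₀ 1) := by
    calc (∫⁻ y in S1, ENNReal.ofReal (c y))
        = ∫⁻ y in S1, ENNReal.ofReal (8 * M) *
            (ENNReal.ofReal (M * A y) + ENNReal.ofReal (|u y| * A y)) := by
          simp_rw [hsplitc]
      _ = ENNReal.ofReal (8 * M) * ∫⁻ y in S1,
            (ENNReal.ofReal (M * A y) + ENNReal.ofReal (|u y| * A y)) :=
          lintegral_const_mul' _ _ ENNReal.ofReal_ne_top
      _ = ENNReal.ofReal (8 * M) *
            ((∫⁻ y in S1, ENNReal.ofReal (M * A y)) +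
              ∫⁻ y in S1, ENNReal.ofReal (|u y| * A y)) := by
          rw [lintegral_add_left (by simp only [hAdef]; fun_prop)]
      _ ≤ ENNReal.ofReal (8 * M) * (ENNReal.ofReal M * 11 + eTail γ α u x₀ 1) := by
          refine mul_le_mul_right (add_le_add ?_ (le_of_eq hTeq)) _
          calc (∫⁻ y in S1, ENNReal.ofReal (M * A y))
              = ENNReal.ofReal M * ∫⁻ y in S1, ENNReal.ofReal (A y) := by
                simp_rw [ENNReal.ofReal_mul hM0]
                exact lintegral_const_mul' _ _ ENNReal.ofReal_ne_top
            _ ≤ ENNReal.ofReal M * 11 := mul_le_mul_right hJ _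
  have hMeq : ENNReal.ofReal M = eSup u (ball1 x₀ (2 * ρ)) := ENNReal.ofReal_toReal hMfin
  calc (∫⁻ y in S1, ∫⁻ x in ball1 x₀ R, ENNReal.ofReal
        (|u x - u y| * |(u x - ubar) * φ x| * cknK γ α x y))
      ≤ ∫⁻ y in S1, ENNReal.ofReal (c y) * ENNReal.ofReal (16 * ρ ^ (1 - α)) :=
        setLIntegral_mono' hS1meas hinner
    _ = ENNReal.ofReal (16 * ρ ^ (1 - α)) * ∫⁻ y in S1, ENNReal.ofReal (c y) := by
        simp_rw [mul_comm (ENNReal.ofReal (c _)) (ENNReal.ofReal (16 * ρ ^ (1 - α)))]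
        exact lintegral_const_mul' _ _ ENNReal.ofReal_ne_top
    _ ≤ ENNReal.ofReal (16 * ρ ^ (1 - α)) *
        (ENNReal.ofReal (8 * M) * (ENNReal.ofReal M * 11 + eTail γ α u x₀ 1)) :=
        mul_le_mul_right houter _
    _ ≤ ENNReal.ofReal (10000 * ρ ^ (1 - α)) * eSup u (ball1 x₀ (2 * ρ)) *
        (eSup u (ball1 x₀ (2 * ρ)) + eTail γ α u x₀ 1) := by
        rw [hMeq, ENNReal.ofReal_mul (by norm_num : (0:ℝ) ≤ 8),
          ENNReal.ofReal_ofNat, hMeq]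
        set MM := eSup u (ball1 x₀ (2 * ρ)) with hMM
        set TT := eTail γ α u x₀ 1 with hTT
        have h11 : MM * 11 + TT ≤ 11 * (MM + TT) := by
          rw [mul_add, mul_comm MM 11]
          exact add_le_add le_rfl (le_mul_of_one_le_left (by simp) (by norm_num))
        calc ENNReal.ofReal (16 * ρ ^ (1 - α)) * (8 * MM * (MM * 11 + TT))
            ≤ ENNReal.ofReal (16 * ρ ^ (1 - α)) * (8 * MM * (11 * (MM + TT))) :=
              mul_le_mul_right (mul_le_mul_right h11 _) _
          _ = (ENNReal.ofReal (16 * ρ ^ (1 - α)) * 88) * (MM * (MM + TT)) := by ring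
          _ ≤ ENNReal.ofReal (10000 * ρ ^ (1 - α)) * (MM * (MM + TT)) := by
              refine mul_le_mul_left ?_ _
              rw [show ((88:ℝ≥0∞)) = ENNReal.ofReal 88 from (ENNReal.ofReal_ofNat 88).symm,
                ← ENNReal.ofReal_mul (by positivity)]
              apply ENNReal.ofReal_le_ofReal
              have h7 : 0 ≤ ρ ^ (1 - α) := Real.rpow_nonneg hρ.le _
              nlinarith
          _ = ENNReal.ofReal (10000 * ρ ^ (1 - α)) * MM * (MM + TT) := by rw [mul_assoc]
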